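/- The invariant derivations ∇₁ = x D_x + y D_y and ∇₂ = u_x D_y − u_y D_x satisfy the commutator relation [∇₁, ∇₂] = (I_{2b}/I₁)∇₁ + ((I_{2a} − I₁)/I₁)∇₂ as derivations on jet space, where I₁ = x u_x + y u_y, I_{2a} = x²u_{xx} + 2xy u_{xy} + y²u_{yy}, I_{2b} = x u_y u_{xx} − y u_x u_{yy} + (y u_y − x u_x)u_{xy}. -/

import Mathlib

/-
The commutator of two horizontal derivations `a D_x + b D_y` only involves `D_x`, `D_y` applied to
the coefficients, and the coefficients of `∇₁, ∇₂` are jet coordinates. Since `D_x`, `D_y` act on a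
coordinate by shifting it (`D_x u_y = u_{xy}`, `D_y x = 0`, ...), the commutator coefficients are
explicit polynomials, and both identities reduce to polynomial identities.
-/

open Matrix

noncomputable section

/-- Coordinates on `J²ℝ²`: `(x, y, u, u_x, u_y, u_xx, u_xy, u_yy)`. -/
def Dx (F : (Fin 8 → ℝ) → ℝ) : (Fin 8 → ℝ) → ℝ := fun p =>
  fderiv ℝ F p ![1, 0, p 3, p 5, p 6, 0, 0, 0]

def Dy (F : (Fin 8 → ℝ) → ℝ) : (Fin 8 → ℝ) → ℝ := fun p =>
  fderiv ℝ F p ![0, 1, p 4, p 6, p 7, 0, 0, 0]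

/-- `∇₁ = x D_x + y D_y`. -/
def Nabla1 (F : (Fin 8 → ℝ) → ℝ) : (Fin 8 → ℝ) → ℝ := fun p =>
  p 0 * Dx F p + p 1 * Dy F p

/-- `∇₂ = u_x D_y − u_y D_x`. -/
def Nabla2 (F : (Fin 8 → ℝ) → ℝ) : (Fin 8 → ℝ) → ℝ := fun p =>
  p 3 * Dy F p - p 4 * Dx F p

/-- `D_x`-coefficient of `∇₁` -/
def a1 : (Fin 8 → ℝ) → ℝ := fun p => p 0
/-- `D_y`-coefficient of `∇₁` -/
def b1 : (Fin 8 → ℝ) → ℝ := fun p => p 1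
/-- `D_x`-coefficient of `∇₂` -/
def a2 : (Fin 8 → ℝ) → ℝ := fun p => -(p 4)
/-- `D_y`-coefficient of `∇₂` -/
def b2 : (Fin 8 → ℝ) → ℝ := fun p => p 3

def I1 : (Fin 8 → ℝ) → ℝ := fun p => p 0 * p 3 + p 1 * p 4

def I2a : (Fin 8 → ℝ) → ℝ := fun p =>
  (p 0) ^ 2 * p 5 + 2 * p 0 * p 1 * p 6 + (p 1) ^ 2 * p 7

def I2b : (Fin 8 → ℝ) → ℝ := fun p =>
  p 0 * p 4 * p 5 - p 1 * p 3 * p 7 + (p 1 * p 4 - p 0 * p 3) * p 6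

lemma fderiv_coord_apply {𝕜 ι : Type*} [NontriviallyNormedField 𝕜] [Fintype ι] (i : ι)
    (p v : ι → 𝕜) : fderiv 𝕜 (fun q : ι → 𝕜 => q i) p v = v i := by
  rw [(hasFDerivAt_apply i p).fderiv]
  rfl

lemma Dx_coord (i : Fin 8) (p : Fin 8 → ℝ) :
    Dx (fun q => q i) p = ![1, 0, p 3, p 5, p 6, 0, 0, 0] i :=
  fderiv_coord_apply i p _

lemma Dy_coord (i : Fin 8) (p : Fin 8 → ℝ) :
    Dy (fun q => q i) p = ![0, 1, p 4, p 6, p 7, 0, 0, 0] i :=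
  fderiv_coord_apply i p _

lemma Dx_neg (F : (Fin 8 → ℝ) → ℝ) (p : Fin 8 → ℝ) : Dx (-F) p = -Dx F p := by
  simp only [Dx, fderiv_neg, _root_.neg_apply]

lemma Dy_neg (F : (Fin 8 → ℝ) → ℝ) (p : Fin 8 → ℝ) : Dy (-F) p = -Dy F p := by
  simp only [Dy, fderiv_neg, _root_.neg_apply]

lemma Nabla1_a2 (p : Fin 8 → ℝ) : Nabla1 a2 p = -(p 0 * p 6 + p 1 * p 7) := by
  rw [show a2 = -fun q => q 4 from rfl]
  simp only [Nabla1, Dx_neg, Dy_neg, Dx_coord, Dy_coord, Matrix.cons_val]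
  ring

lemma Nabla2_a1 (p : Fin 8 → ℝ) : Nabla2 a1 p = -p 4 := by
  rw [show a1 = fun q => q 0 from rfl]
  simp [Nabla2, Dx_coord, Dy_coord]

lemma Nabla1_b2 (p : Fin 8 → ℝ) : Nabla1 b2 p = p 0 * p 5 + p 1 * p 6 := by
  rw [show b2 = fun q => q 3 from rfl]
  simp [Nabla1, Dx_coord, Dy_coord]

lemma Nabla2_b1 (p : Fin 8 → ℝ) : Nabla2 b1 p = p 3 := by
  rw [show b1 = fun q => q 1 from rfl]
  simp [Nabla2, Dx_coord, Dy_coord]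

/-- `I₁·[∇₁,∇₂] = I_{2b}·∇₁ + (I_{2a} − I₁)·∇₂`, componentwise in the
coefficients of `D_x` and `D_y`, where
`[∇₁,∇₂] = (∇₁(a₂) − ∇₂(a₁))D_x + (∇₁(b₂) − ∇₂(b₁))D_y`. -/
theorem stmt_4 : ∀ p : Fin 8 → ℝ,
    I1 p * (Nabla1 a2 p - Nabla2 a1 p) = I2b p * a1 p + (I2a p - I1 p) * a2 p ∧
    I1 p * (Nabla1 b2 p - Nabla2 b1 p) = I2b p * b1 p + (I2a p - I1 p) * b2 p := by
  intro p
  rw [Nabla1_a2, Nabla2_a1, Nabla1_b2, Nabla2_b1]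
  constructor <;> simp only [I1, I2a, I2b, a1, a2, b1, b2] <;> ring
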